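/- The polynomials Y_n(x; μ, γ), defined by Y_{2n}(x) = (-1)^n (μ+1/2)_n ₁F₁(-n; μ+1/2; x²-γ²) and Y_{2n+1}(x) = (-1)^n (μ+3/2)_n (x-γ) ₁F₁(-n; μ+3/2; x²-γ²), satisfy the recurrence x Y_n(x) = Y_{n+1}(x) + (-1)^n γ Y_n(x) + ϑ_n Y_{n-1}(x) with ϑ_{2n} = n, ϑ_{2n+1} = n + μ + 1/2, Y_{-1}=0, Y_0=1. -/

import Mathlib

/-! With `b = μ + 1/2` and `z = x² - γ²` one has `Y_{2m} = (-1)^m m! L_m^{(b-1)}(z)` and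
`Y_{2m+1} = (-1)^m (x - γ) m! L_m^{(b)}(z)`, `L_m^{(α)}` the generalized Laguerre polynomials.
Since `(x + γ)(x - γ) = z`, the recurrence at even and odd indices reduces to the contiguous
relations `z L_m^{(α+1)} = (m + α + 1) L_m^{(α)} - (m + 1) L_{m+1}^{(α)}` and
`L_{m+1}^{(α)} = L_{m+1}^{(α+1)} - L_m^{(α+1)}`, which are checked coefficientwise on the
terminating `₁F₁` sums. -/

/-- Pochhammer symbol `(a)_k` over the reals. -/
noncomputable def poch (a : ℝ) (k : ℕ) : ℝ := (ascPochhammer ℝ k).eval a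

/-- Terminating confluent hypergeometric sum `₁F₁(-n; b; z)`. -/
noncomputable def hyp1F1 (n : ℕ) (b z : ℝ) : ℝ :=
  ∑ k ∈ Finset.range (n+1),
    poch (-(n : ℝ)) k / (poch b k * (Nat.factorial k : ℝ)) * z ^ k

lemma poch_zero (a : ℝ) : poch a 0 = 1 := by simp [poch]

lemma poch_succ (a : ℝ) (k : ℕ) : poch a (k + 1) = poch a k * (a + k) :=
  ascPochhammer_succ_eval k a

lemma poch_succ_left (a : ℝ) (k : ℕ) : poch a (k + 1) = a * poch (a + 1) k := by
  simp [poch, ascPochhammer_succ_left, Polynomial.eval_comp]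

lemma poch_ne_zero {b : ℝ} (hb : ∀ k : ℕ, b + k ≠ 0) (n : ℕ) : poch b n ≠ 0 := by
  induction n with
  | zero => simp [poch_zero]
  | succ n ih => rw [poch_succ]; exact mul_ne_zero ih (hb n)

lemma poch_add_one_ne_zero {b : ℝ} (hb : ∀ k : ℕ, b + k ≠ 0) (n : ℕ) :
    poch (b + 1) n ≠ 0 :=
  poch_ne_zero (fun j => by convert hb (j + 1) using 1; push_cast; ring) n

lemma poch_neg_natCast_succ_self (m : ℕ) : poch (-(m : ℝ)) (m + 1) = 0 := by
  rw [poch_succ, neg_add_cancel, mul_zero]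

lemma hyp1F1_zero (b z : ℝ) : hyp1F1 0 b z = 1 := by simp [hyp1F1, poch_zero]

lemma hyp1F1_eq_sum_range_add_two (m : ℕ) (b z : ℝ) :
    hyp1F1 m b z = ∑ k ∈ Finset.range (m + 2),
      poch (-(m : ℝ)) k / (poch b k * (k.factorial : ℝ)) * z ^ k := by
  rw [hyp1F1, Finset.sum_range_succ (n := m + 1), poch_neg_natCast_succ_self]
  simp

lemma hyp1F1_sub_hyp1F1_succ {b : ℝ} (hb : ∀ k : ℕ, b + k ≠ 0) (m : ℕ) (z : ℝ) :
    b * (hyp1F1 m b z - hyp1F1 (m + 1) b z) = z * hyp1F1 m (b + 1) z := by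
  rw [hyp1F1_eq_sum_range_add_two m b z, hyp1F1, hyp1F1, ← Finset.sum_sub_distrib,
    Finset.mul_sum, Finset.mul_sum, Finset.sum_range_succ' _ (m + 1)]
  simp only [poch_zero, pow_zero, sub_self, mul_zero, add_zero]
  refine Finset.sum_congr rfl fun k _ => ?_
  have hb0 : b ≠ 0 := by simpa using hb 0
  have hb1 := poch_add_one_ne_zero hb k
  rw [poch_succ (-(m : ℝ)), poch_succ_left (-((m + 1 : ℕ) : ℝ)), poch_succ_left b,
    Nat.factorial_succ]
  push_cast
  rw [show -((m : ℝ) + 1) + 1 = -m by ring]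
  field_simp
  ring

lemma mul_hyp1F1_succ {b : ℝ} (hb : ∀ k : ℕ, b + k ≠ 0) (m : ℕ) (z : ℝ) :
    b * hyp1F1 (m + 1) b z
      = (b + m + 1) * hyp1F1 (m + 1) (b + 1) z - (m + 1) * hyp1F1 m (b + 1) z := by
  rw [hyp1F1_eq_sum_range_add_two m (b + 1) z, hyp1F1, hyp1F1, Finset.mul_sum, Finset.mul_sum,
    Finset.mul_sum, ← Finset.sum_sub_distrib]
  refine Finset.sum_congr rfl fun k _ => ?_
  have hb1 := poch_add_one_ne_zero hb k
  have hbk := poch_ne_zero hb k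
  have eA : poch b k * (b + k) = b * poch (b + 1) k := by rw [← poch_succ, poch_succ_left]
  have eB : poch (-((m : ℝ) + 1)) k * (-((m : ℝ) + 1) + k)
      = -((m : ℝ) + 1) * poch (-(m : ℝ)) k := by
    rw [← poch_succ, poch_succ_left]; ring_nf
  push_cast
  field_simp
  linear_combination (z ^ k * poch (-((m : ℝ) + 1)) k) * eA.symm + (z ^ k * poch b k) * eB

/-- `m! L_m^{(b-1)}(z)`, in terms of the generalized Laguerre polynomial `L_m^{(α)}`. -/
noncomputable def scaledLaguerre (m : ℕ) (b z : ℝ) : ℝ := poch b m * hyp1F1 m b z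

lemma scaledLaguerre_zero (b z : ℝ) : scaledLaguerre 0 b z = 1 := by
  simp [scaledLaguerre, poch_zero, hyp1F1_zero]

lemma mul_scaledLaguerre_add_one {b : ℝ} (hb : ∀ k : ℕ, b + k ≠ 0) (m : ℕ) (z : ℝ) :
    z * scaledLaguerre m (b + 1) z
      = (b + m) * scaledLaguerre m b z - scaledLaguerre (m + 1) b z := by
  simp only [scaledLaguerre]
  linear_combination (-poch (b + 1) m) * hyp1F1_sub_hyp1F1_succ hb m z
    - (hyp1F1 m b z - hyp1F1 (m + 1) b z) * poch_succ_left b m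
    + hyp1F1 m b z * poch_succ b m

lemma scaledLaguerre_succ {b : ℝ} (hb : ∀ k : ℕ, b + k ≠ 0) (m : ℕ) (z : ℝ) :
    scaledLaguerre (m + 1) b z
      = scaledLaguerre (m + 1) (b + 1) z - (m + 1) * scaledLaguerre m (b + 1) z := by
  simp only [scaledLaguerre]
  linear_combination poch (b + 1) m * mul_hyp1F1_succ hb m z
    + hyp1F1 (m + 1) b z * poch_succ_left b m
    - hyp1F1 (m + 1) (b + 1) z * poch_succ (b + 1) m

/-- recurrence relation for the polynomials `Y_n(x; μ, γ)`. -/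
theorem Y_polynomials_recurrence
    (μ γ : ℝ) (hμ : μ > -1/2) (Y : ℕ → ℝ → ℝ)
    (hEven : ∀ (n : ℕ) (x : ℝ),
      Y (2*n) x = (-1 : ℝ)^n * poch (μ + 1/2) n * hyp1F1 n (μ + 1/2) (x^2 - γ^2))
    (hOdd : ∀ (n : ℕ) (x : ℝ),
      Y (2*n+1) x = (-1 : ℝ)^n * poch (μ + 3/2) n * (x - γ) * hyp1F1 n (μ + 3/2) (x^2 - γ^2))
    (θ : ℕ → ℝ)
    (hθe : ∀ n : ℕ, θ (2*n) = (n : ℝ))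
    (hθo : ∀ n : ℕ, θ (2*n+1) = (n : ℝ) + μ + 1/2) :
    (∀ x : ℝ, Y 0 x = 1) ∧
    (∀ x : ℝ, x * Y 0 x = Y 1 x + γ * Y 0 x) ∧
    (∀ (n : ℕ) (x : ℝ),
      x * Y (n+1) x = Y (n+2) x + (-1 : ℝ)^(n+1) * γ * Y (n+1) x + θ (n+1) * Y n x) := by
  have hb : ∀ k : ℕ, μ + 1/2 + k ≠ 0 := fun k => by
    have : (0 : ℝ) ≤ k := k.cast_nonneg
    exact (by linarith : 0 < μ + 1/2 + k).ne'
  have hY₀ (m : ℕ) (x : ℝ) :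
      Y (2 * m) x = (-1) ^ m * scaledLaguerre m (μ + 1/2) (x ^ 2 - γ ^ 2) := by
    rw [hEven, mul_assoc, scaledLaguerre]
  have hY₁ (m : ℕ) (x : ℝ) :
      Y (2 * m + 1) x = (-1) ^ m * (x - γ) * scaledLaguerre m (μ + 1/2 + 1) (x ^ 2 - γ ^ 2) := by
    rw [hOdd, scaledLaguerre, show μ + 3/2 = μ + 1/2 + 1 by ring]; ring
  refine ⟨fun x => by simpa [scaledLaguerre_zero] using hY₀ 0 x,
    fun x => by simp [hY₀ 0 x, hY₁ 0 x, scaledLaguerre_zero], fun n x => ?_⟩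
  obtain ⟨m, rfl | rfl⟩ := Nat.even_or_odd' n
  · rw [show 2 * m + 2 = 2 * (m + 1) by ring, hY₀, hY₁, hY₀, hθo,
      (odd_two_mul_add_one m).neg_one_pow]
    linear_combination (-1) ^ m * mul_scaledLaguerre_add_one hb m (x ^ 2 - γ ^ 2)
  · rw [show 2 * m + 1 + 2 = 2 * (m + 1) + 1 by ring, show 2 * m + 1 + 1 = 2 * (m + 1) by ring,
      hY₀, hY₁, hY₁, hθe, (even_two_mul (m + 1)).neg_one_pow, Nat.cast_succ]
    linear_combination (-1) ^ (m + 1) * (x - γ) * scaledLaguerre_succ hb m (x ^ 2 - γ ^ 2)
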